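/- arXiv:1401.0970 — 4 statements merged into one kernel-verified Lean document; each statement's English description precedes it below -/
import Mathlib

section
/- Given a signature morphism σ = ⟨σ_P, σ_A, σ_E⟩ : ⟨P₁,A₁,E₁⟩ → ⟨P₂,A₂,E₂⟩ and a component C₂ = ⟨P₂,A₂,E₂,π₂,δ₂,ε₂⟩, the pullback component σ*(C₂) = ⟨P₁,A₁,E₁, a ↦ Sen(σ_P)⁻¹(π₂(σ_A(a))), a ↦ Sen(σ_P)⁻¹(δ₂(σ_A(a))), e ↦ σ_A⁻¹(ε₂(σ_E(e)))⟩ is a component, and σ is a component morphism σ*(C₂) → C₂; moreover, σ*(C₂) is the largest component structure on ⟨P₁,A₁,E₁⟩ for which σ is a component morphism into C₂ (any component C₁ on the signature ⟨P₁,A₁,E₁⟩ such that σ : C₁ → C₂ is a component morphism satisfies π₁(a) ⊆ Sen(σ_P)⁻¹(π₂(σ_A(a))), etc.). -/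
open CategoryTheory

/-- A component over a sentence functor `Sen`. -/
structure Component (Sen : Type ⥤ Type) where
  P : Type
  A : Type
  E : Type
  pres : A → Set (Sen.obj P)
  desc : A → Set (Sen.obj P)
  obs : E → Set A

/-- A component morphism. -/
structure CompHom {Sen : Type ⥤ Type} (C₁ C₂ : Component Sen) where
  σP : C₁.P → C₂.P
  σA : C₁.A → C₂.A
  σE : C₁.E → C₂.E
  hpres : ∀ a, Sen.map (TypeCat.ofHom σP) '' C₁.pres a ⊆ C₂.pres (σA a)
  hdesc : ∀ a, Sen.map (TypeCat.ofHom σP) '' C₁.desc a ⊆ C₂.desc (σA a)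
  hobs : ∀ e, σA '' C₁.obs e ⊆ C₂.obs (σE e)

@[ext] theorem CompHom.ext' {Sen : Type ⥤ Type} {C₁ C₂ : Component Sen}
    {f g : CompHom C₁ C₂} (h1 : f.σP = g.σP) (h2 : f.σA = g.σA) (h3 : f.σE = g.σE) :
    f = g := by
  cases f; cases g; simp_all

def CompHom.id {Sen : Type ⥤ Type} (C : Component Sen) : CompHom C C where
  σP := _root_.id
  σA := _root_.id
  σE := _root_.id
  hpres := by
    intro a x hx
    obtain ⟨y, hy, rfl⟩ := hx
    have : Sen.map (TypeCat.ofHom (_root_.id : C.P → C.P)) y = y := by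
      rw [show TypeCat.ofHom (_root_.id : C.P → C.P) = 𝟙 C.P from rfl, Sen.map_id]; rfl
    rwa [this]
  hdesc := by
    intro a x hx
    obtain ⟨y, hy, rfl⟩ := hx
    have : Sen.map (TypeCat.ofHom (_root_.id : C.P → C.P)) y = y := by
      rw [show TypeCat.ofHom (_root_.id : C.P → C.P) = 𝟙 C.P from rfl, Sen.map_id]; rfl
    rwa [this]
  hobs := by intro e x hx; simpa using hx

def CompHom.comp {Sen : Type ⥤ Type} {C₁ C₂ C₃ : Component Sen}
    (f : CompHom C₁ C₂) (g : CompHom C₂ C₃) : CompHom C₁ C₃ where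
  σP := g.σP ∘ f.σP
  σA := g.σA ∘ f.σA
  σE := g.σE ∘ f.σE
  hpres := by
    intro a x hx
    obtain ⟨y, hy, rfl⟩ := hx
    have hmap : Sen.map (TypeCat.ofHom (g.σP ∘ f.σP)) y =
        Sen.map (TypeCat.ofHom g.σP) (Sen.map (TypeCat.ofHom f.σP) y) := by
      rw [show TypeCat.ofHom (g.σP ∘ f.σP) = TypeCat.ofHom f.σP ≫ TypeCat.ofHom g.σP from rfl,
        Sen.map_comp]; rfl
    rw [hmap]
    exact g.hpres (f.σA a) ⟨_, f.hpres a ⟨y, hy, rfl⟩, rfl⟩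
  hdesc := by
    intro a x hx
    obtain ⟨y, hy, rfl⟩ := hx
    have hmap : Sen.map (TypeCat.ofHom (g.σP ∘ f.σP)) y =
        Sen.map (TypeCat.ofHom g.σP) (Sen.map (TypeCat.ofHom f.σP) y) := by
      rw [show TypeCat.ofHom (g.σP ∘ f.σP) = TypeCat.ofHom f.σP ≫ TypeCat.ofHom g.σP from rfl,
        Sen.map_comp]; rfl
    rw [hmap]
    exact g.hdesc (f.σA a) ⟨_, f.hdesc a ⟨y, hy, rfl⟩, rfl⟩
  hobs := by
    intro e x hx
    obtain ⟨y, hy, rfl⟩ := hx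
    exact g.hobs (f.σE e) ⟨_, f.hobs e ⟨y, hy, rfl⟩, rfl⟩

instance Sys.category (Sen : Type ⥤ Type) : Category (Component Sen) where
  Hom := CompHom
  id := CompHom.id
  comp := CompHom.comp
  id_comp := by intros; rfl
  comp_id := by intros; rfl
  assoc := by intros; rfl

/-- The pullback component `σ*(C₂)` along a signature morphism
`σ = ⟨σP, σA, σE⟩ : ⟨P₁,A₁,E₁⟩ → ⟨P₂,A₂,E₂⟩`. -/
def pullbackComp (Sen : Type ⥤ Type) {P₁ A₁ E₁ : Type} (C₂ : Component Sen)
    (σP : P₁ → C₂.P) (σA : A₁ → C₂.A) (σE : E₁ → C₂.E) : Component Sen where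
  P := P₁
  A := A₁
  E := E₁
  pres a := Sen.map (TypeCat.ofHom σP) ⁻¹' C₂.pres (σA a)
  desc a := Sen.map (TypeCat.ofHom σP) ⁻¹' C₂.desc (σA a)
  obs e := σA ⁻¹' C₂.obs (σE e)

def pullbackCompHom (Sen : Type ⥤ Type) {P₁ A₁ E₁ : Type} (C₂ : Component Sen)
    (σP : P₁ → C₂.P) (σA : A₁ → C₂.A) (σE : E₁ → C₂.E) :
    CompHom (pullbackComp Sen C₂ σP σA σE) C₂ where
  σP := σP
  σA := σA
  σE := σE
  hpres _ := Set.image_preimage_subset _ _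
  hdesc _ := Set.image_preimage_subset _ _
  hobs _ := Set.image_preimage_subset _ _

/-- `σ*(C₂)` is a component (by construction), `σ` is a component
morphism `σ*(C₂) → C₂`, and `σ*(C₂)` is the largest component structure on the
signature `⟨P₁,A₁,E₁⟩` for which `σ` is a component morphism into `C₂`. -/
theorem pullback_component (Sen : Type ⥤ Type) {P₁ A₁ E₁ : Type}
    (C₂ : Component Sen) (σP : P₁ → C₂.P) (σA : A₁ → C₂.A) (σE : E₁ → C₂.E) :
    (∃ h : CompHom (pullbackComp Sen C₂ σP σA σE) C₂,
        h.σP = σP ∧ h.σA = σA ∧ h.σE = σE) ∧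
    (∀ (π₁ δ₁ : A₁ → Set (Sen.obj P₁)) (ε₁ : E₁ → Set A₁),
        (∀ a, Sen.map (TypeCat.ofHom σP) '' π₁ a ⊆ C₂.pres (σA a)) →
        (∀ a, Sen.map (TypeCat.ofHom σP) '' δ₁ a ⊆ C₂.desc (σA a)) →
        (∀ e, σA '' ε₁ e ⊆ C₂.obs (σE e)) →
        (∀ a, π₁ a ⊆ (pullbackComp Sen C₂ σP σA σE).pres a) ∧
        (∀ a, δ₁ a ⊆ (pullbackComp Sen C₂ σP σA σE).desc a) ∧
        (∀ e, ε₁ e ⊆ (pullbackComp Sen C₂ σP σA σE).obs e)) := by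
  refine ⟨⟨pullbackCompHom Sen C₂ σP σA σE, rfl, rfl, rfl⟩, ?_⟩
  intro π₁ δ₁ ε₁ hπ hδ hε
  exact ⟨fun a => Set.image_subset_iff.mp (hπ a), fun a => Set.image_subset_iff.mp (hδ a),
    fun e => Set.image_subset_iff.mp (hε e)⟩
end

section
/- The category Sys of components and component morphisms has binary coproducts: the coproduct of C₁ = ⟨P₁,A₁,E₁,π₁,δ₁,ε₁⟩ and C₂ = ⟨P₂,A₂,E₂,π₂,δ₂,ε₂⟩ is the component on the signature ⟨P₁⊎P₂, A₁⊎A₂, E₁⊎E₂⟩ whose prescription at an action inl(a) is the image of π₁(a) under Sen(inl_P) (and symmetrically for inr and for δ and ε), together with the evident inclusion morphisms; it satisfies the universal property of coproducts in Sys. -/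
open CategoryTheory

/-- The coproduct component of `C₁` and `C₂`: the signature is the componentwise
disjoint union, and the prescriptions, descriptions and event-observation sets
are the direct images of those of `C₁` and `C₂` along the injections. -/
def coprodComp {Sen : Type ⥤ Type} (C₁ C₂ : Component Sen) : Component Sen where
  P := C₁.P ⊕ C₂.P
  A := C₁.A ⊕ C₂.A
  E := C₁.E ⊕ C₂.E
  pres := Sum.elim (fun a => Sen.map (TypeCat.ofHom Sum.inl) '' C₁.pres a)
                   (fun a => Sen.map (TypeCat.ofHom Sum.inr) '' C₂.pres a)
  desc := Sum.elim (fun a => Sen.map (TypeCat.ofHom Sum.inl) '' C₁.desc a)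
                   (fun a => Sen.map (TypeCat.ofHom Sum.inr) '' C₂.desc a)
  obs := Sum.elim (fun e => Sum.inl '' C₁.obs e) (fun e => Sum.inr '' C₂.obs e)

/-! The copairing of `f` and `g` is `Sum.elim` on each sort, and it is the only candidate since
a map out of a disjoint union is determined by its restrictions. It is a component morphism
because `Sen` is a functor: `Sen(Sum.elim f g) ∘ Sen(inl) = Sen(f)`, so the coproduct's
prescription `Sen(inl)(π₁(a))` is sent to `Sen(f)(π₁(a)) ⊆ π_D(f a)`, and likewise for
descriptions and observations. -/

theorem CategoryTheory.Functor.image_map_ofHom_image (F : Type ⥤ Type) {X Y Z : Type}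
    (u : X → Y) (p : Y → Z) (s : Set (F.obj X)) :
    F.map (TypeCat.ofHom p) '' (F.map (TypeCat.ofHom u) '' s) =
      F.map (TypeCat.ofHom (p ∘ u)) '' s := by
  rw [Set.image_image, show TypeCat.ofHom (p ∘ u) = TypeCat.ofHom u ≫ TypeCat.ofHom p from rfl,
    F.map_comp]
  rfl

namespace CompHom

variable {Sen : Type ⥤ Type} {C₁ C₂ D : Component Sen}

def coprodInl (C₁ C₂ : Component Sen) : CompHom C₁ (coprodComp C₁ C₂) where
  σP := Sum.inl
  σA := Sum.inl
  σE := Sum.inl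
  hpres _ := subset_rfl
  hdesc _ := subset_rfl
  hobs _ := subset_rfl

def coprodInr (C₁ C₂ : Component Sen) : CompHom C₂ (coprodComp C₁ C₂) where
  σP := Sum.inr
  σA := Sum.inr
  σE := Sum.inr
  hpres _ := subset_rfl
  hdesc _ := subset_rfl
  hobs _ := subset_rfl

def coprodDesc (f : CompHom C₁ D) (g : CompHom C₂ D) : CompHom (coprodComp C₁ C₂) D where
  σP := Sum.elim f.σP g.σP
  σA := Sum.elim f.σA g.σA
  σE := Sum.elim f.σE g.σE
  hpres
    | .inl a => (Sen.image_map_ofHom_image _ _ _).trans_subset (f.hpres a)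
    | .inr a => (Sen.image_map_ofHom_image _ _ _).trans_subset (g.hpres a)
  hdesc
    | .inl a => (Sen.image_map_ofHom_image _ _ _).trans_subset (f.hdesc a)
    | .inr a => (Sen.image_map_ofHom_image _ _ _).trans_subset (g.hdesc a)
  hobs
    | .inl e => (Set.image_image _ _ _).trans_subset (f.hobs e)
    | .inr e => (Set.image_image _ _ _).trans_subset (g.hobs e)

theorem coprodInl_comp_coprodDesc (f : CompHom C₁ D) (g : CompHom C₂ D) :
    (coprodInl C₁ C₂).comp (coprodDesc f g) = f :=
  rfl

theorem coprodInr_comp_coprodDesc (f : CompHom C₁ D) (g : CompHom C₂ D) :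
    (coprodInr C₁ C₂).comp (coprodDesc f g) = g :=
  rfl

theorem coprod_hom_ext {h₁ h₂ : CompHom (coprodComp C₁ C₂) D}
    (hl : (coprodInl C₁ C₂).comp h₁ = (coprodInl C₁ C₂).comp h₂)
    (hr : (coprodInr C₁ C₂).comp h₁ = (coprodInr C₁ C₂).comp h₂) : h₁ = h₂ := by
  ext1 <;> funext x <;> rcases x with x | x
  exacts [congrFun (congrArg σP hl) x, congrFun (congrArg σP hr) x,
    congrFun (congrArg σA hl) x, congrFun (congrArg σA hr) x,
    congrFun (congrArg σE hl) x, congrFun (congrArg σE hr) x]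

end CompHom

/-- `Sys` has binary coproducts, given by `coprodComp` together
with the evident inclusion morphisms, satisfying the universal property. -/
theorem sys_binary_coproducts (Sen : Type ⥤ Type) (C₁ C₂ : Component Sen) :
    ∃ (inl : CompHom C₁ (coprodComp C₁ C₂)) (inr : CompHom C₂ (coprodComp C₁ C₂)),
      inl.σP = Sum.inl ∧ inl.σA = Sum.inl ∧ inl.σE = Sum.inl ∧
      inr.σP = Sum.inr ∧ inr.σA = Sum.inr ∧ inr.σE = Sum.inr ∧
      ∀ (D : Component Sen) (f : CompHom C₁ D) (g : CompHom C₂ D),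
        ∃! h : CompHom (coprodComp C₁ C₂) D, inl.comp h = f ∧ inr.comp h = g := by
  refine ⟨CompHom.coprodInl C₁ C₂, CompHom.coprodInr C₁ C₂, rfl, rfl, rfl, rfl, rfl, rfl,
    fun D f g => ⟨CompHom.coprodDesc f g, ⟨CompHom.coprodInl_comp_coprodDesc f g,
      CompHom.coprodInr_comp_coprodDesc f g⟩, ?_⟩⟩
  rintro h ⟨hf, hg⟩
  exact CompHom.coprod_hom_ext (hf.trans (CompHom.coprodInl_comp_coprodDesc f g).symm)
    (hg.trans (CompHom.coprodInr_comp_coprodDesc f g).symm)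
end

section
/- A component morphism ⟨σ_P, σ_A, σ_E⟩ : C₁ → C₂ in Sys is an isomorphism if and only if σ_P, σ_A, σ_E are bijections and for all actions a of C₁ and events e of C₁: Sen(σ_P)(π₁(a)) = π₂(σ_A(a)), Sen(σ_P)(δ₁(a)) = δ₂(σ_A(a)), and σ_A(ε₁(e)) = ε₂(σ_E(e)); here Sen is assumed to preserve monomorphisms (injections). -/
open CategoryTheory

open Function

/-! An inverse morphism turns the inclusions defining a morphism into equalities, since
applying the inverse and then `f` returns the target sets. Conversely, when the inclusions are
equalities, the inverse bijections carry the target sets back onto the source sets, because `Sen`,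
like any functor, sends inverse maps to inverse maps. -/

theorem CategoryTheory.Functor.leftInverse_map_ofHom (F : Type ⥤ Type) {X Y : Type}
    {f : X → Y} {g : Y → X} (h : LeftInverse g f) :
    LeftInverse (F.map (TypeCat.ofHom g)) (F.map (TypeCat.ofHom f)) := fun x => by
  rw [← Functor.map_comp_apply,
    show TypeCat.ofHom f ≫ TypeCat.ofHom g = 𝟙 X from congrArg TypeCat.ofHom (funext h),
    Functor.map_id_apply]

section ImageFamily

variable {α β ι κ : Type*} {f : α → β} {g : β → α} {σ : ι → κ} {τ : κ → ι}
  {u : ι → Set α} {v : κ → Set β}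

theorem image_eq_of_image_subset_of_leftInverse (hfg : LeftInverse f g) (hτσ : LeftInverse τ σ)
    (hf : ∀ i, f '' u i ⊆ v (σ i)) (hg : ∀ j, g '' v j ⊆ u (τ j)) (i : ι) :
    f '' u i = v (σ i) :=
  (hf i).antisymm <| calc
    v (σ i) = f '' (g '' v (σ i)) := (hfg.image_image _).symm
    _ ⊆ f '' u i := Set.image_mono ((hg (σ i)).trans_eq (congrArg u (hτσ i)))

theorem image_eq_of_image_eq_of_leftInverse (hgf : LeftInverse g f) (hστ : LeftInverse σ τ)
    (hf : ∀ i, f '' u i = v (σ i)) (j : κ) :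
    g '' v j = u (τ j) := by
  rw [← hστ j, ← hf, hgf.image_image, hστ j]

end ImageFamily

namespace CompHom

variable {Sen : Type ⥤ Type} {C₁ C₂ : Component Sen}

theorem comp_eq_id_iff {f : CompHom C₁ C₂} {g : CompHom C₂ C₁} :
    f.comp g = CompHom.id C₁ ↔
      LeftInverse g.σP f.σP ∧ LeftInverse g.σA f.σA ∧ LeftInverse g.σE f.σE := by
  constructor
  · intro h
    exact ⟨congrFun (congrArg σP h), congrFun (congrArg σA h), congrFun (congrArg σE h)⟩
  · rintro ⟨hP, hA, hE⟩
    exact CompHom.ext' (funext hP) (funext hA) (funext hE)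

noncomputable def inverse (f : CompHom C₁ C₂) (hP : Bijective f.σP) (hA : Bijective f.σA)
    (hE : Bijective f.σE)
    (hpres : ∀ a, Sen.map (TypeCat.ofHom f.σP) '' C₁.pres a = C₂.pres (f.σA a))
    (hdesc : ∀ a, Sen.map (TypeCat.ofHom f.σP) '' C₁.desc a = C₂.desc (f.σA a))
    (hobs : ∀ e, f.σA '' C₁.obs e = C₂.obs (f.σE e)) : CompHom C₂ C₁ where
  σP := surjInv hP.2
  σA := surjInv hA.2
  σE := surjInv hE.2
  hpres a := (image_eq_of_image_eq_of_leftInverse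
    (Sen.leftInverse_map_ofHom (leftInverse_surjInv hP)) (rightInverse_surjInv hA.2) hpres a).le
  hdesc a := (image_eq_of_image_eq_of_leftInverse
    (Sen.leftInverse_map_ofHom (leftInverse_surjInv hP)) (rightInverse_surjInv hA.2) hdesc a).le
  hobs e := (image_eq_of_image_eq_of_leftInverse
    (leftInverse_surjInv hA) (rightInverse_surjInv hE.2) hobs e).le

end CompHom

theorem compHom_iso_iff_general (Sen : Type ⥤ Type)
    {C₁ C₂ : Component Sen} (f : CompHom C₁ C₂) :
    (∃ g : CompHom C₂ C₁, f.comp g = CompHom.id C₁ ∧ g.comp f = CompHom.id C₂) ↔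
    (Function.Bijective f.σP ∧ Function.Bijective f.σA ∧ Function.Bijective f.σE ∧
      (∀ a : C₁.A, Sen.map (TypeCat.ofHom f.σP) '' C₁.pres a = C₂.pres (f.σA a)) ∧
      (∀ a : C₁.A, Sen.map (TypeCat.ofHom f.σP) '' C₁.desc a = C₂.desc (f.σA a)) ∧
      (∀ e : C₁.E, f.σA '' C₁.obs e = C₂.obs (f.σE e))) := by
  constructor
  · rintro ⟨g, hfg, hgf⟩
    obtain ⟨hgfP, hgfA, hgfE⟩ := CompHom.comp_eq_id_iff.1 hfg
    obtain ⟨hfgP, hfgA, hfgE⟩ := CompHom.comp_eq_id_iff.1 hgf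
    have hSen := Sen.leftInverse_map_ofHom hfgP
    exact ⟨⟨hgfP.injective, hfgP.surjective⟩, ⟨hgfA.injective, hfgA.surjective⟩,
      ⟨hgfE.injective, hfgE.surjective⟩,
      image_eq_of_image_subset_of_leftInverse hSen hgfA f.hpres g.hpres,
      image_eq_of_image_subset_of_leftInverse hSen hgfA f.hdesc g.hdesc,
      image_eq_of_image_subset_of_leftInverse hfgA hgfE f.hobs g.hobs⟩
  · rintro ⟨hP, hA, hE, hpres, hdesc, hobs⟩
    refine ⟨f.inverse hP hA hE hpres hdesc hobs, CompHom.comp_eq_id_iff.2 ?_,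
      CompHom.comp_eq_id_iff.2 ?_⟩
    · exact ⟨leftInverse_surjInv hP, leftInverse_surjInv hA, leftInverse_surjInv hE⟩
    · exact ⟨rightInverse_surjInv hP.2, rightInverse_surjInv hA.2, rightInverse_surjInv hE.2⟩

/-- assuming `Sen` preserves injections, a component morphism is
an isomorphism (has a two-sided inverse component morphism) iff its three
signature components are bijections and the direct images of prescriptions,
descriptions and event-observation sets are exactly the corresponding sets of
the target. -/
theorem compHom_iso_iff (Sen : Type ⥤ Type)
    (hSen : ∀ {X Y : Type} (g : X → Y), Function.Injective g →
      Function.Injective (Sen.map (TypeCat.ofHom g)))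
    {C₁ C₂ : Component Sen} (f : CompHom C₁ C₂) :
    (∃ g : CompHom C₂ C₁, f.comp g = CompHom.id C₁ ∧ g.comp f = CompHom.id C₂) ↔
    (Function.Bijective f.σP ∧ Function.Bijective f.σA ∧ Function.Bijective f.σE ∧
      (∀ a : C₁.A, Sen.map (TypeCat.ofHom f.σP) '' C₁.pres a = C₂.pres (f.σA a)) ∧
      (∀ a : C₁.A, Sen.map (TypeCat.ofHom f.σP) '' C₁.desc a = C₂.desc (f.σA a)) ∧
      (∀ e : C₁.E, f.σA '' C₁.obs e = C₂.obs (f.σE e))) :=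
  compHom_iso_iff_general Sen f
end

section
/- The category Sys over a colimit-preserving Sen has pushouts; concretely, the pushout of component morphisms τ₁ : C₀ → C₁ and τ₂ : C₀ → C₂ has as underlying signature the componentwise pushout in Set³ of the underlying signature morphisms, and its prescriptions, descriptions, and event-observation sets are the unions of the direct images of those of C₁ and C₂ along the pushout injections. -/
open CategoryTheory

open Limits

/-- The component structure on the componentwise pushout signature
`⟨QP, QA, QE⟩`: prescriptions, descriptions and event-observation sets are the
unions of the direct images of those of `C₁` and `C₂` along the pushout
injections. -/
def pushoutComp (Sen : Type ⥤ Type) (C₁ C₂ : Component Sen) {QP QA QE : Type}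
    (iP₁ : C₁.P → QP) (iP₂ : C₂.P → QP) (iA₁ : C₁.A → QA) (iA₂ : C₂.A → QA)
    (iE₁ : C₁.E → QE) (iE₂ : C₂.E → QE) : Component Sen where
  P := QP
  A := QA
  E := QE
  pres x := (⋃ a ∈ {a : C₁.A | iA₁ a = x}, Sen.map (TypeCat.ofHom iP₁) '' C₁.pres a) ∪
            (⋃ a ∈ {a : C₂.A | iA₂ a = x}, Sen.map (TypeCat.ofHom iP₂) '' C₂.pres a)
  desc x := (⋃ a ∈ {a : C₁.A | iA₁ a = x}, Sen.map (TypeCat.ofHom iP₁) '' C₁.desc a) ∪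
            (⋃ a ∈ {a : C₂.A | iA₂ a = x}, Sen.map (TypeCat.ofHom iP₂) '' C₂.desc a)
  obs x := (⋃ e ∈ {e : C₁.E | iE₁ e = x}, iA₁ '' C₁.obs e) ∪
           (⋃ e ∈ {e : C₂.E | iE₂ e = x}, iA₂ '' C₂.obs e)

/-! Each of the sorts `P`, `A`, `E` is glued as a pushout of sets. The mediating signature
morphism out of the glued component respects prescriptions, descriptions and observations
because every element of a glued family is the image of an element of a family of `C₁` or `C₂`,
which `g₁`, `g₂` already carry along. -/

def IsTypePushout {X Y Z Q : Type} (f : X → Y) (g : X → Z) (i₁ : Y → Q) (i₂ : Z → Q) :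
    Prop :=
  i₁ ∘ f = i₂ ∘ g ∧ ∀ (T : Type) (h₁ : Y → T) (h₂ : Z → T),
    h₁ ∘ f = h₂ ∘ g → ∃! u : Q → T, u ∘ i₁ = h₁ ∧ u ∘ i₂ = h₂

theorem exists_isTypePushout {X Y Z : Type} (f : X → Y) (g : X → Z) :
    ∃ (Q : Type) (i₁ : Y → Q) (i₂ : Z → Q), IsTypePushout f g i₁ i₂ := by
  let R : Y ⊕ Z → Y ⊕ Z → Prop := fun p q => ∃ x, p = .inl (f x) ∧ q = .inr (g x)
  refine ⟨Quot R, Quot.mk R ∘ .inl, Quot.mk R ∘ .inr,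
    funext fun x => Quot.sound ⟨x, rfl, rfl⟩, fun T h₁ h₂ h => ?_⟩
  have hR : ∀ p q, R p q → Sum.elim h₁ h₂ p = Sum.elim h₁ h₂ q := by
    rintro _ _ ⟨x, rfl, rfl⟩
    exact congrFun h x
  refine ⟨Quot.lift (Sum.elim h₁ h₂) hR, ⟨rfl, rfl⟩, ?_⟩
  rintro v ⟨rfl, rfl⟩
  funext q
  induction q using Quot.ind with
  | mk p => cases p <;> rfl

theorem CategoryTheory.Functor.map_ofHom_comp_of_comp_eq (F : Type ⥤ Type) {X Y Z : Type}
    {f : X → Y} {g : Y → Z} {k : X → Z} (h : g ∘ f = k) :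
    ⇑(F.map (TypeCat.ofHom g)) ∘ ⇑(F.map (TypeCat.ofHom f)) = ⇑(F.map (TypeCat.ofHom k)) :=
  h ▸ funext fun y => (F.map_comp_apply (TypeCat.ofHom f) (TypeCat.ofHom g) y).symm

section FiberImage

variable {α α₁ α₂ β γ σ σ₁ σ₂ τ : Type*}

theorem image_biUnion_fiber_image_subset {f : α → β} {m : σ₁ → σ} {F : α → Set σ₁}
    {u : β → γ} {v : σ → τ} {G : γ → Set τ} {φ : σ₁ → τ} {ψ : α → γ}
    (hv : v ∘ m = φ) (hu : u ∘ f = ψ) (h : ∀ a, φ '' F a ⊆ G (ψ a)) (x : β) :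
    v '' ⋃ a ∈ {a | f a = x}, m '' F a ⊆ G (u x) := by
  subst hv hu
  rw [Set.image_iUnion₂, Set.iUnion₂_subset_iff]
  rintro a rfl
  rw [← Set.image_comp]
  exact h a

theorem image_union_biUnion_fiber_image_subset {f₁ : α₁ → β} {f₂ : α₂ → β}
    {m₁ : σ₁ → σ} {m₂ : σ₂ → σ} {F₁ : α₁ → Set σ₁} {F₂ : α₂ → Set σ₂}
    {u : β → γ} {v : σ → τ} {G : γ → Set τ}
    {φ₁ : σ₁ → τ} {φ₂ : σ₂ → τ} {ψ₁ : α₁ → γ} {ψ₂ : α₂ → γ}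
    (hv₁ : v ∘ m₁ = φ₁) (hv₂ : v ∘ m₂ = φ₂) (hu₁ : u ∘ f₁ = ψ₁) (hu₂ : u ∘ f₂ = ψ₂)
    (h₁ : ∀ a, φ₁ '' F₁ a ⊆ G (ψ₁ a)) (h₂ : ∀ a, φ₂ '' F₂ a ⊆ G (ψ₂ a)) (x : β) :
    v '' ((⋃ a ∈ {a | f₁ a = x}, m₁ '' F₁ a) ∪ ⋃ a ∈ {a | f₂ a = x}, m₂ '' F₂ a) ⊆
      G (u x) := by
  rw [Set.image_union]
  exact Set.union_subset (image_biUnion_fiber_image_subset hv₁ hu₁ h₁ x)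
    (image_biUnion_fiber_image_subset hv₂ hu₂ h₂ x)

end FiberImage

section PushoutComp

variable {Sen : Type ⥤ Type} {C₀ C₁ C₂ : Component Sen} {QP QA QE : Type}
  (iP₁ : C₁.P → QP) (iP₂ : C₂.P → QP) (iA₁ : C₁.A → QA) (iA₂ : C₂.A → QA)
  (iE₁ : C₁.E → QE) (iE₂ : C₂.E → QE)

def pushoutInl : CompHom C₁ (pushoutComp Sen C₁ C₂ iP₁ iP₂ iA₁ iA₂ iE₁ iE₂) where
  σP := iP₁
  σA := iA₁
  σE := iE₁
  hpres _ _ hs := Or.inl (Set.mem_biUnion rfl hs)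
  hdesc _ _ hs := Or.inl (Set.mem_biUnion rfl hs)
  hobs _ _ ha := Or.inl (Set.mem_biUnion rfl ha)

def pushoutInr : CompHom C₂ (pushoutComp Sen C₁ C₂ iP₁ iP₂ iA₁ iA₂ iE₁ iE₂) where
  σP := iP₂
  σA := iA₂
  σE := iE₂
  hpres _ _ hs := Or.inr (Set.mem_biUnion rfl hs)
  hdesc _ _ hs := Or.inr (Set.mem_biUnion rfl hs)
  hobs _ _ ha := Or.inr (Set.mem_biUnion rfl ha)

variable {iP₁ iP₂ iA₁ iA₂ iE₁ iE₂}

theorem pushoutInl_comp_eq_pushoutInr_comp {τ₁ : CompHom C₀ C₁} {τ₂ : CompHom C₀ C₂}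
    (hP : iP₁ ∘ τ₁.σP = iP₂ ∘ τ₂.σP) (hA : iA₁ ∘ τ₁.σA = iA₂ ∘ τ₂.σA)
    (hE : iE₁ ∘ τ₁.σE = iE₂ ∘ τ₂.σE) :
    τ₁.comp (pushoutInl iP₁ iP₂ iA₁ iA₂ iE₁ iE₂) = τ₂.comp (pushoutInr iP₁ iP₂ iA₁ iA₂ iE₁ iE₂) :=
  CompHom.ext' hP hA hE

def pushoutDesc {D : Component Sen} {g₁ : CompHom C₁ D} {g₂ : CompHom C₂ D}
    {uP : QP → D.P} {uA : QA → D.A} {uE : QE → D.E}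
    (hP₁ : uP ∘ iP₁ = g₁.σP) (hP₂ : uP ∘ iP₂ = g₂.σP) (hA₁ : uA ∘ iA₁ = g₁.σA)
    (hA₂ : uA ∘ iA₂ = g₂.σA) (hE₁ : uE ∘ iE₁ = g₁.σE) (hE₂ : uE ∘ iE₂ = g₂.σE) :
    CompHom (pushoutComp Sen C₁ C₂ iP₁ iP₂ iA₁ iA₂ iE₁ iE₂) D where
  σP := uP
  σA := uA
  σE := uE
  hpres := image_union_biUnion_fiber_image_subset (Sen.map_ofHom_comp_of_comp_eq hP₁)
    (Sen.map_ofHom_comp_of_comp_eq hP₂) hA₁ hA₂ g₁.hpres g₂.hpres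
  hdesc := image_union_biUnion_fiber_image_subset (Sen.map_ofHom_comp_of_comp_eq hP₁)
    (Sen.map_ofHom_comp_of_comp_eq hP₂) hA₁ hA₂ g₁.hdesc g₂.hdesc
  hobs := image_union_biUnion_fiber_image_subset hA₁ hA₂ hE₁ hE₂ g₁.hobs g₂.hobs

theorem pushoutComp_existsUnique_desc {τ₁ : CompHom C₀ C₁} {τ₂ : CompHom C₀ C₂}
    (hP : IsTypePushout τ₁.σP τ₂.σP iP₁ iP₂) (hA : IsTypePushout τ₁.σA τ₂.σA iA₁ iA₂)
    (hE : IsTypePushout τ₁.σE τ₂.σE iE₁ iE₂) {D : Component Sen}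
    {g₁ : CompHom C₁ D} {g₂ : CompHom C₂ D} (hg : τ₁.comp g₁ = τ₂.comp g₂) :
    ∃! u : CompHom (pushoutComp Sen C₁ C₂ iP₁ iP₂ iA₁ iA₂ iE₁ iE₂) D,
      (pushoutInl iP₁ iP₂ iA₁ iA₂ iE₁ iE₂).comp u = g₁ ∧
        (pushoutInr iP₁ iP₂ iA₁ iA₂ iE₁ iE₂).comp u = g₂ := by
  obtain ⟨uP, ⟨hP₁, hP₂⟩, huP⟩ := hP.2 D.P g₁.σP g₂.σP (congrArg CompHom.σP hg)
  obtain ⟨uA, ⟨hA₁, hA₂⟩, huA⟩ := hA.2 D.A g₁.σA g₂.σA (congrArg CompHom.σA hg)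
  obtain ⟨uE, ⟨hE₁, hE₂⟩, huE⟩ := hE.2 D.E g₁.σE g₂.σE (congrArg CompHom.σE hg)
  refine ⟨pushoutDesc hP₁ hP₂ hA₁ hA₂ hE₁ hE₂,
    ⟨CompHom.ext' hP₁ hA₁ hE₁, CompHom.ext' hP₂ hA₂ hE₂⟩, ?_⟩
  rintro v ⟨rfl, rfl⟩
  exact CompHom.ext' (huP _ ⟨rfl, rfl⟩) (huA _ ⟨rfl, rfl⟩) (huE _ ⟨rfl, rfl⟩)

noncomputable def isColimitPushoutComp {τ₁ : C₀ ⟶ C₁} {τ₂ : C₀ ⟶ C₂}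
    (hP : IsTypePushout τ₁.σP τ₂.σP iP₁ iP₂) (hA : IsTypePushout τ₁.σA τ₂.σA iA₁ iA₂)
    (hE : IsTypePushout τ₁.σE τ₂.σE iE₁ iE₂) :
    IsColimit (PushoutCocone.mk (f := τ₁) (g := τ₂) (pushoutInl iP₁ iP₂ iA₁ iA₂ iE₁ iE₂)
      (pushoutInr iP₁ iP₂ iA₁ iA₂ iE₁ iE₂) (pushoutInl_comp_eq_pushoutInr_comp hP.1 hA.1 hE.1)) :=
  have h s := pushoutComp_existsUnique_desc hP hA hE (PushoutCocone.condition s)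
  PushoutCocone.IsColimit.mk _ (fun s => (h s).choose) (fun s => (h s).choose_spec.1.1)
    (fun s => (h s).choose_spec.1.2) (fun s m hm₁ hm₂ => (h s).choose_spec.2 m ⟨hm₁, hm₂⟩)

end PushoutComp

theorem Sys.hasPushouts (Sen : Type ⥤ Type) : HasPushouts (Component Sen) := by
  refine @hasPushouts_of_hasColimit_span _ _ fun {C₀ C₁ C₂} τ₁ τ₂ => ?_
  obtain ⟨QP, iP₁, iP₂, hP⟩ := exists_isTypePushout τ₁.σP τ₂.σP
  obtain ⟨QA, iA₁, iA₂, hA⟩ := exists_isTypePushout τ₁.σA τ₂.σA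
  obtain ⟨QE, iE₁, iE₂, hE⟩ := exists_isTypePushout τ₁.σE τ₂.σE
  exact ⟨⟨_, isColimitPushoutComp hP hA hE⟩⟩

theorem sys_pushouts_general (Sen : Type ⥤ Type)
    {C₀ C₁ C₂ : Component Sen} (τ₁ : CompHom C₀ C₁) (τ₂ : CompHom C₀ C₂)
    {QP QA QE : Type}
    (iP₁ : C₁.P → QP) (iP₂ : C₂.P → QP)
    (hPcomm : iP₁ ∘ τ₁.σP = iP₂ ∘ τ₂.σP)
    (hPuniv : ∀ (T : Type) (h₁ : C₁.P → T) (h₂ : C₂.P → T),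
      h₁ ∘ τ₁.σP = h₂ ∘ τ₂.σP → ∃! u : QP → T, u ∘ iP₁ = h₁ ∧ u ∘ iP₂ = h₂)
    (iA₁ : C₁.A → QA) (iA₂ : C₂.A → QA)
    (hAcomm : iA₁ ∘ τ₁.σA = iA₂ ∘ τ₂.σA)
    (hAuniv : ∀ (T : Type) (h₁ : C₁.A → T) (h₂ : C₂.A → T),
      h₁ ∘ τ₁.σA = h₂ ∘ τ₂.σA → ∃! u : QA → T, u ∘ iA₁ = h₁ ∧ u ∘ iA₂ = h₂)
    (iE₁ : C₁.E → QE) (iE₂ : C₂.E → QE)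
    (hEcomm : iE₁ ∘ τ₁.σE = iE₂ ∘ τ₂.σE)
    (hEuniv : ∀ (T : Type) (h₁ : C₁.E → T) (h₂ : C₂.E → T),
      h₁ ∘ τ₁.σE = h₂ ∘ τ₂.σE → ∃! u : QE → T, u ∘ iE₁ = h₁ ∧ u ∘ iE₂ = h₂) :
    HasPushouts (Component Sen) ∧
    ∃ (j₁ : CompHom C₁ (pushoutComp Sen C₁ C₂ iP₁ iP₂ iA₁ iA₂ iE₁ iE₂))
      (j₂ : CompHom C₂ (pushoutComp Sen C₁ C₂ iP₁ iP₂ iA₁ iA₂ iE₁ iE₂)),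
      j₁.σP = iP₁ ∧ j₁.σA = iA₁ ∧ j₁.σE = iE₁ ∧
      j₂.σP = iP₂ ∧ j₂.σA = iA₂ ∧ j₂.σE = iE₂ ∧
      τ₁.comp j₁ = τ₂.comp j₂ ∧
      ∀ (D : Component Sen) (g₁ : CompHom C₁ D) (g₂ : CompHom C₂ D),
        τ₁.comp g₁ = τ₂.comp g₂ →
        ∃! u : CompHom (pushoutComp Sen C₁ C₂ iP₁ iP₂ iA₁ iA₂ iE₁ iE₂) D,
          j₁.comp u = g₁ ∧ j₂.comp u = g₂ :=
  ⟨Sys.hasPushouts Sen, pushoutInl iP₁ iP₂ iA₁ iA₂ iE₁ iE₂, pushoutInr iP₁ iP₂ iA₁ iA₂ iE₁ iE₂,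
    rfl, rfl, rfl, rfl, rfl, rfl, pushoutInl_comp_eq_pushoutInr_comp hPcomm hAcomm hEcomm,
    fun _ _ _ hg => pushoutComp_existsUnique_desc ⟨hPcomm, hPuniv⟩ ⟨hAcomm, hAuniv⟩
      ⟨hEcomm, hEuniv⟩ hg⟩

/-- `Sys` over a colimit-preserving `Sen` has pushouts; concretely,
given `τ₁ : C₀ → C₁`, `τ₂ : C₀ → C₂` and a componentwise pushout
`⟨QP, QA, QE⟩` in `Set³` of the underlying signature morphisms, the component
`pushoutComp` together with the evident injections is a pushout of `τ₁` and
`τ₂` in `Sys`. -/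
theorem sys_pushouts (Sen : Type ⥤ Type) [PreservesColimits Sen]
    {C₀ C₁ C₂ : Component Sen} (τ₁ : CompHom C₀ C₁) (τ₂ : CompHom C₀ C₂)
    {QP QA QE : Type}
    (iP₁ : C₁.P → QP) (iP₂ : C₂.P → QP)
    (hPcomm : iP₁ ∘ τ₁.σP = iP₂ ∘ τ₂.σP)
    (hPuniv : ∀ (T : Type) (h₁ : C₁.P → T) (h₂ : C₂.P → T),
      h₁ ∘ τ₁.σP = h₂ ∘ τ₂.σP → ∃! u : QP → T, u ∘ iP₁ = h₁ ∧ u ∘ iP₂ = h₂)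
    (iA₁ : C₁.A → QA) (iA₂ : C₂.A → QA)
    (hAcomm : iA₁ ∘ τ₁.σA = iA₂ ∘ τ₂.σA)
    (hAuniv : ∀ (T : Type) (h₁ : C₁.A → T) (h₂ : C₂.A → T),
      h₁ ∘ τ₁.σA = h₂ ∘ τ₂.σA → ∃! u : QA → T, u ∘ iA₁ = h₁ ∧ u ∘ iA₂ = h₂)
    (iE₁ : C₁.E → QE) (iE₂ : C₂.E → QE)
    (hEcomm : iE₁ ∘ τ₁.σE = iE₂ ∘ τ₂.σE)
    (hEuniv : ∀ (T : Type) (h₁ : C₁.E → T) (h₂ : C₂.E → T),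
      h₁ ∘ τ₁.σE = h₂ ∘ τ₂.σE → ∃! u : QE → T, u ∘ iE₁ = h₁ ∧ u ∘ iE₂ = h₂) :
    HasPushouts (Component Sen) ∧
    ∃ (j₁ : CompHom C₁ (pushoutComp Sen C₁ C₂ iP₁ iP₂ iA₁ iA₂ iE₁ iE₂))
      (j₂ : CompHom C₂ (pushoutComp Sen C₁ C₂ iP₁ iP₂ iA₁ iA₂ iE₁ iE₂)),
      j₁.σP = iP₁ ∧ j₁.σA = iA₁ ∧ j₁.σE = iE₁ ∧
      j₂.σP = iP₂ ∧ j₂.σA = iA₂ ∧ j₂.σE = iE₂ ∧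
      τ₁.comp j₁ = τ₂.comp j₂ ∧
      ∀ (D : Component Sen) (g₁ : CompHom C₁ D) (g₂ : CompHom C₂ D),
        τ₁.comp g₁ = τ₂.comp g₂ →
        ∃! u : CompHom (pushoutComp Sen C₁ C₂ iP₁ iP₂ iA₁ iA₂ iE₁ iE₂) D,
          j₁.comp u = g₁ ∧ j₂.comp u = g₂ :=
  sys_pushouts_general Sen τ₁ τ₂ iP₁ iP₂ hPcomm hPuniv iA₁ iA₂ hAcomm hAuniv iE₁ iE₂ hEcomm hEuniv
end
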